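/- For a positive integer n, β, λ, u, c, t > 0, the series (βt)^{n-1} (uβ/(u+ct)) ∑_{m=0}^∞ (λ^m (u+ct)^m/m!) (βt)^{nm}/Γ(n(m+1)) + (βt)^n (cn/(u+ct)) ∑_{m=0}^∞ (λ^m(u+ct)^m/m!) (βt)^{nm}/Γ(n(m+1)+1) equals (β/(u+ct)) ((βt)^{n-1}/Γ(n)) [ u·₀F_n(1, 1+1/n, …, 1+(n−1)/n; Z) + ct·₀F_n(1+1/n, …, 1+n/n; Z) ] where Z = λ(u+ct)(βt)^n / n^n. -/

import Mathlib

/-!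
Both series are `₀F_n` series in disguise. Gauss's multiplication formula for the Pochhammer
symbol, `(n a)_{n m} = n ^ (n m) ∏_{k < n} (a + k / n)_m`, gives
`Γ(n (a + m)) = Γ(n a) n ^ (n m) ∏_{k < n} (a + k / n)_m`, which matches the two series term by
term with `₀F_n` at `Z`: take `a = 1` for the first and `a = 1 + 1/n` for the second, where
`Γ(n + 1) = n Γ(n)` absorbs the factor `n`.
-/

open Real Finset

/-- Pochhammer symbol. -/
noncomputable def poch (a : ℝ) (m : ℕ) : ℝ := ∏ k ∈ range m, (a + k)

/-- Generalised hypergeometric series `₀F_n(C₀, …, C_{n-1}; x)`. -/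
noncomputable def F0n (n : ℕ) (C : ℕ → ℝ) (x : ℝ) : ℝ :=
  ∑' m : ℕ, x ^ m / ((∏ k ∈ range n, poch (C k) m) * (m.factorial : ℝ))

theorem poch_succ (a : ℝ) (m : ℕ) : poch a (m + 1) = poch a m * (a + m) :=
  prod_range_succ _ _

theorem poch_natCast_mul_mul (n m : ℕ) (a : ℝ) :
    poch (n * a) (n * m) = (n : ℝ) ^ (n * m) * ∏ k ∈ range n, poch (a + k / n) m := by
  induction m with
  | zero => simp [poch]
  | succ m ih =>
    have hblock : ∏ k ∈ range n, (n * a + ((n * m + k : ℕ) : ℝ))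
        = (n : ℝ) ^ n * ∏ k ∈ range n, (a + k / n + m) := by
      rw [pow_eq_prod_const, ← prod_mul_distrib]
      refine prod_congr rfl fun k hk => ?_
      have : (n : ℝ) ≠ 0 := Nat.cast_ne_zero.mpr (Nat.ne_zero_of_lt (mem_range.1 hk))
      field_simp
      push_cast
      ring
    rw [Nat.mul_succ, poch, prod_range_add, ← poch, ih, hblock, pow_add]
    simp only [poch_succ, prod_mul_distrib]
    ring

theorem Gamma_add_natCast_eq_mul_poch {x : ℝ} (hx : 0 < x) (j : ℕ) :
    Gamma (x + j) = Gamma x * poch x j := by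
  induction j with
  | zero => simp [poch]
  | succ j ih =>
    rw [Nat.cast_succ, ← add_assoc, Gamma_add_one (by positivity), ih, poch_succ]
    ring

theorem tsum_div_Gamma_natCast_mul_eq_F0n {n : ℕ} (hn : n ≠ 0) {a : ℝ} (ha : 0 < a)
    (w x : ℝ) :
    ∑' m : ℕ, w ^ m / (m.factorial : ℝ) * (x ^ (n * m) / Gamma (n * (a + m)))
      = (Gamma (n * a))⁻¹ * F0n n (fun k => a + k / n) (w * x ^ n / n ^ n) := by
  rw [F0n, ← tsum_mul_left]
  refine tsum_congr fun m => ?_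
  have hGamma : Gamma (n * (a + m))
      = Gamma (n * a) * ((n : ℝ) ^ (n * m) * ∏ k ∈ range n, poch (a + k / n) m) := by
    rw [mul_add, show (n : ℝ) * m = ((n * m : ℕ) : ℝ) by push_cast; rfl,
      Gamma_add_natCast_eq_mul_poch (by positivity), poch_natCast_mul_mul]
  rw [hGamma, div_pow, mul_pow, ← pow_mul, ← pow_mul]
  ring

theorem gamma_density_closed_form_general (n : ℕ) (hn : 0 < n) (β lam u c t : ℝ) :
    (β * t) ^ (n - 1) * (u * β / (u + c * t)) *
        (∑' m : ℕ, lam ^ m * (u + c * t) ^ m / (m.factorial : ℝ) *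
          ((β * t) ^ (n * m) / Gamma ((n : ℝ) * (m + 1))))
      + (β * t) ^ n * (c * n / (u + c * t)) *
        (∑' m : ℕ, lam ^ m * (u + c * t) ^ m / (m.factorial : ℝ) *
          ((β * t) ^ (n * m) / Gamma ((n : ℝ) * (m + 1) + 1)))
      = (β / (u + c * t)) * ((β * t) ^ (n - 1) / Gamma n) *
          (u * F0n n (fun k => 1 + (k : ℝ) / n) (lam * (u + c * t) * (β * t) ^ n / n ^ n)
            + c * t * F0n n (fun k => 1 + ((k : ℝ) + 1) / n)
                (lam * (u + c * t) * (β * t) ^ n / n ^ n)) := by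
  have hn0 : (n : ℝ) ≠ 0 := Nat.cast_ne_zero.mpr hn.ne'
  have hsum₁ : (∑' m : ℕ, lam ^ m * (u + c * t) ^ m / (m.factorial : ℝ) *
        ((β * t) ^ (n * m) / Gamma ((n : ℝ) * (m + 1))))
      = (Gamma n)⁻¹ * F0n n (fun k => 1 + (k : ℝ) / n)
          (lam * (u + c * t) * (β * t) ^ n / n ^ n) := by
    simpa only [mul_pow, add_comm _ (1 : ℝ), mul_one] using
      tsum_div_Gamma_natCast_mul_eq_F0n hn.ne' one_pos (lam * (u + c * t)) (β * t)
  have hsum₂ : (∑' m : ℕ, lam ^ m * (u + c * t) ^ m / (m.factorial : ℝ) *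
        ((β * t) ^ (n * m) / Gamma ((n : ℝ) * (m + 1) + 1)))
      = (n * Gamma n)⁻¹ * F0n n (fun k => 1 + ((k : ℝ) + 1) / n)
          (lam * (u + c * t) * (β * t) ^ n / n ^ n) := by
    have hshift (x : ℝ) : (n : ℝ) * (1 + 1 / n + x) = n * (x + 1) + 1 := by field_simp; ring
    have hparam (k : ℕ) : 1 + 1 / (n : ℝ) + k / n = 1 + ((k : ℝ) + 1) / n := by ring
    have hGamma : Gamma (n * (1 + 1 / n)) = n * Gamma n := by
      rw [mul_one_add, mul_one_div_cancel hn0, Gamma_add_one hn0]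
    simpa only [mul_pow, hshift, hparam, hGamma] using
      tsum_div_Gamma_natCast_mul_eq_F0n hn.ne' (a := 1 + 1 / n) (by positivity)
        (lam * (u + c * t)) (β * t)
  have hpow : (β * t) ^ n = (β * t) ^ (n - 1) * (β * t) := by
    rw [← pow_succ, Nat.sub_add_cancel hn]
  rw [hsum₁, hsum₂, hpow]
  field_simp

/-- The ruin-time density series for Gamma(n, β) inter-claim times (ordinary renewal case,
`n` a positive integer) equals the closed form in terms of `₀F_n`. -/
theorem gamma_density_closed_form (n : ℕ) (hn : 0 < n) (β lam u c t : ℝ)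
    (hβ : 0 < β) (hlam : 0 < lam) (hu : 0 < u) (hc : 0 < c) (ht : 0 < t) :
    (β * t) ^ (n - 1) * (u * β / (u + c * t)) *
        (∑' m : ℕ, lam ^ m * (u + c * t) ^ m / (m.factorial : ℝ) *
          ((β * t) ^ (n * m) / Gamma ((n : ℝ) * (m + 1))))
      + (β * t) ^ n * (c * n / (u + c * t)) *
        (∑' m : ℕ, lam ^ m * (u + c * t) ^ m / (m.factorial : ℝ) *
          ((β * t) ^ (n * m) / Gamma ((n : ℝ) * (m + 1) + 1)))
      = (β / (u + c * t)) * ((β * t) ^ (n - 1) / Gamma n) *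
          (u * F0n n (fun k => 1 + (k : ℝ) / n) (lam * (u + c * t) * (β * t) ^ n / n ^ n)
            + c * t * F0n n (fun k => 1 + ((k : ℝ) + 1) / n)
                (lam * (u + c * t) * (β * t) ^ n / n ^ n)) :=
  gamma_density_closed_form_general n hn β lam u c t
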